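/- Let f : 𝔽₂ⁿ → 𝔽₂ and let J ⊆ {0,1,…,n-1} with |J| = s. Suppose the algebraic normal form of f contains no monomial x_{j₁}⋯x_{j_t} with t > 1 and all indices j₁,…,j_t ∈ J. Then the nonlinearity of f satisfies N_f ≤ 2^{n-1} - 2^{s-1}. -/

import Mathlib

/-!
On the subspace `V = {x | x j = 0 for j ∉ J}` of dimension `s` every nonlinear monomial of the
algebraic normal form vanishes or has zero coefficient, so `f` agrees on `V` with its affine part
`a x = c ∅ + ∑ i, c {i} * x i`. Average the distance from `f` to `a + ⟪u, ·⟫` over the `2^(n-s)`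
vectors `u` vanishing on `J`: points of `V` never contribute, while for `x ∉ V` the functional
`u ↦ ⟪u, x⟫` is balanced on those `u`, so exactly half of them disagree with `f` at `x`. The
average distance is thus `(2^n - 2^s) / 2`, and some `u` does at least as well.
-/

open Finset

section

variable {ι : Type*} [Fintype ι] [DecidableEq ι]

lemma sum_finset_eq_empty_add_sum_singleton {M : Type*} [AddCommMonoid M] (F : Finset ι → M)
    (hF : ∀ S, 1 < #S → F S = 0) :
    ∑ S, F S = F ∅ + ∑ i, F {i} := by
  rw [← sum_subset (subset_univ (insert ∅ (univ.map ⟨singleton, singleton_injective⟩)))]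
  · rw [sum_insert (by simp), sum_map]
    rfl
  · intro S _ hS
    refine hF S (Nat.lt_of_not_le fun hle => hS ?_)
    rcases Nat.le_one_iff_eq_zero_or_eq_one.mp hle with h | h
    · simp [card_eq_zero.mp h]
    · obtain ⟨i, rfl⟩ := card_eq_one.mp h
      simp

lemma sum_mul_prod_eq_affine_of_forall_notMem_eq_zero {R : Type*} [CommSemiring R]
    (c : Finset ι → R) (J : Finset ι)
    (hJc : ∀ S, 1 < #S → S ⊆ J → c S = 0) (x : ι → R) (hx : ∀ j ∉ J, x j = 0) :
    ∑ S, c S * ∏ j ∈ S, x j = c ∅ + ∑ i, c {i} * x i := by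
  rw [sum_finset_eq_empty_add_sum_singleton]
  · simp
  intro S hS
  by_cases hSJ : S ⊆ J
  · rw [hJc S hS hSJ, zero_mul]
  · obtain ⟨j, hjS, hjJ⟩ := not_subset.mp hSJ
    rw [prod_eq_zero hjS (hx j hjJ), mul_zero]

lemma card_filter_forall_notMem_eq_zero {R : Type*} [Zero R] [Fintype R] [DecidableEq R]
    (K : Finset ι) :
    #{x : ι → R | ∀ j ∉ K, x j = 0} = Fintype.card R ^ #K := by
  have : ({x : ι → R | ∀ j ∉ K, x j = 0} : Finset _) =
      Fintype.piFinset fun j => if j ∈ K then univ else {0} := by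
    ext x
    simp only [mem_filter, mem_univ, true_and, Fintype.mem_piFinset]
    refine forall_congr' fun j => ?_
    by_cases hj : j ∈ K <;> simp [hj]
  rw [this, Fintype.card_piFinset]
  simp only [apply_ite card, card_univ, card_singleton]
  rw [prod_ite_mem, univ_inter, prod_const]

lemma two_mul_card_filter_ne_add_sum_mul {J : Finset ι} {x : ι → ZMod 2} {j₀ : ι} (hj₀ : j₀ ∉ J)
    (hx : x j₀ ≠ 0) (a b : ZMod 2) :
    2 * #{u : ι → ZMod 2 | (∀ j ∈ J, u j = 0) ∧ a ≠ b + ∑ i, u i * x i}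
      = #{u : ι → ZMod 2 | ∀ j ∈ J, u j = 0} := by
  set U : Finset (ι → ZMod 2) := {u | ∀ j ∈ J, u j = 0}
  set e : ι → ZMod 2 := Pi.single j₀ 1
  have hUe : ∀ u ∈ U, u + e ∈ U := by
    intro u hu
    simp only [U, mem_filter, mem_univ, true_and] at hu ⊢
    intro j hj
    simp [e, hu j hj, ne_of_mem_of_not_mem hj hj₀]
  have hee : ∀ u : ι → ZMod 2, u + e + e = u := fun u => by
    ext i; simp [add_assoc, CharTwo.add_self_eq_zero]
  have hsum : ∀ u : ι → ZMod 2, ∑ i, (u + e) i * x i = ∑ i, u i * x i + 1 := fun u => by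
    have hx1 : x j₀ = 1 := by revert hx; generalize x j₀ = t; decide +revert
    simp [e, add_mul, sum_add_distrib, Pi.single_apply, hx1]
  have hflip : ∀ t : ZMod 2, (a ≠ b + (t + 1)) ↔ a = b + t := by decide +revert
  have hswap : #(U.filter fun u => a ≠ b + ∑ i, u i * x i)
      = #(U.filter fun u => ¬ a ≠ b + ∑ i, u i * x i) := by
    refine card_nbij' (· + e) (· + e) ?_ ?_ (fun u _ => hee u) (fun u _ => hee u) <;>
      intro u hu <;> simp only [coe_filter] at hu ⊢ <;> refine ⟨hUe u hu.1, ?_⟩ <;> rw [hsum]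
    · exact fun h => hu.2 ((hflip _).mp h)
    · exact (hflip _).mpr (not_not.mp hu.2)
  have hsplit := card_filter_add_card_filter_not (s := U) fun u => a ≠ b + ∑ i, u i * x i
  rw [← filter_filter]
  change 2 * #(U.filter fun u => a ≠ b + ∑ i, u i * x i) = #U
  omega

lemma two_mul_sum_card_filter_ne_add_sum_mul (f g : (ι → ZMod 2) → ZMod 2) (J : Finset ι)
    (hfg : ∀ x, (∀ j ∉ J, x j = 0) → f x = g x) :
    2 * ∑ u ∈ ({u | ∀ j ∈ J, u j = 0} : Finset (ι → ZMod 2)),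
        #{x | f x ≠ g x + ∑ i, u i * x i}
      = #{x : ι → ZMod 2 | ¬ ∀ j ∉ J, x j = 0} * #{u : ι → ZMod 2 | ∀ j ∈ J, u j = 0} := by
  set U : Finset (ι → ZMod 2) := {u | ∀ j ∈ J, u j = 0}
  have hfiber : ∀ x : ι → ZMod 2,
      2 * #(U.filter fun u => f x ≠ g x + ∑ i, u i * x i)
        = if ∀ j ∉ J, x j = 0 then 0 else #U := by
    intro x
    split_ifs with hx
    · suffices U.filter (fun u => f x ≠ g x + ∑ i, u i * x i) = ∅ by simp [this]
      refine filter_eq_empty_iff.mpr fun u hu => not_not.mpr ?_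
      have hu : ∀ j ∈ J, u j = 0 := by simpa [U] using hu
      have horth : ∑ i, u i * x i = 0 := sum_eq_zero fun i _ => by
        by_cases hi : i ∈ J
        · rw [hu i hi, zero_mul]
        · rw [hx i hi, mul_zero]
      rw [horth, add_zero, hfg x hx]
    · obtain ⟨j₀, hj₀, hxj₀⟩ : ∃ j ∉ J, x j ≠ 0 := by simpa using hx
      rw [filter_filter]
      exact two_mul_card_filter_ne_add_sum_mul hj₀ hxj₀ _ _
  have hdouble := sum_card_bipartiteAbove_eq_sum_card_bipartiteBelow (s := U) (t := univ)
    fun u x => f x ≠ g x + ∑ i, u i * x i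
  simp only [bipartiteAbove, bipartiteBelow] at hdouble
  calc 2 * ∑ u ∈ U, #{x | f x ≠ g x + ∑ i, u i * x i}
      = 2 * ∑ x, #(U.filter fun u => f x ≠ g x + ∑ i, u i * x i) := by rw [hdouble]
    _ = ∑ x, 2 * #(U.filter fun u => f x ≠ g x + ∑ i, u i * x i) := mul_sum _ _ _
    _ = #{x : ι → ZMod 2 | ¬ ∀ j ∉ J, x j = 0} * #U := by
      simp only [hfiber, sum_ite, sum_const_zero, zero_add, sum_const, smul_eq_mul]

theorem exists_two_mul_card_filter_ne_add_sum_mul_le (f g : (ι → ZMod 2) → ZMod 2)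
    (J : Finset ι) (hfg : ∀ x, (∀ j ∉ J, x j = 0) → f x = g x) :
    ∃ u : ι → ZMod 2,
      2 * #{x | f x ≠ g x + ∑ i, u i * x i} ≤ 2 ^ Fintype.card ι - 2 ^ #J := by
  have hcard : #{x : ι → ZMod 2 | ¬ ∀ j ∉ J, x j = 0} = 2 ^ Fintype.card ι - 2 ^ #J := by
    rw [filter_not, card_sdiff_of_subset (filter_subset _ _), card_univ, Fintype.card_fun,
      ZMod.card, card_filter_forall_notMem_eq_zero, ZMod.card]
  obtain ⟨u, -, hu⟩ :=
    exists_le_of_sum_le (s := ({u | ∀ j ∈ J, u j = 0} : Finset (ι → ZMod 2))) ⟨0, by simp⟩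
      (g := fun _ => 2 ^ Fintype.card ι - 2 ^ #J) <| by
      rw [← mul_sum, two_mul_sum_card_filter_ne_add_sum_mul f g J hfg, hcard, sum_const,
        smul_eq_mul, mul_comm]
  exact ⟨u, hu⟩

end

lemma le_two_pow_pred_sub_two_pow_pred {d n s : ℕ} (h : 2 * d ≤ 2 ^ n - 2 ^ s) :
    d ≤ 2 ^ (n - 1) - 2 ^ (s - 1) := by
  have := Nat.one_le_two_pow (n := s)
  rcases n with _ | n <;> rcases s with _ | s <;>
    simp -failIfUnchanged only [pow_succ, Nat.add_sub_cancel] at h ⊢ <;> omega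

theorem stmt12 (n s : ℕ) (f : (Fin n → ZMod 2) → ZMod 2)
    (J : Finset (Fin n)) (hJ : J.card = s)
    (c : Finset (Fin n) → ZMod 2)
    (hc : ∀ x, f x = ∑ S : Finset (Fin n), c S * ∏ j ∈ S, x j)
    (hJc : ∀ S : Finset (Fin n), 1 < S.card → S ⊆ J → c S = 0) :
    ∃ (c0 : ZMod 2) (cl : Fin n → ZMod 2),
      (Finset.univ.filter (fun x : Fin n → ZMod 2 =>
          f x ≠ c0 + ∑ i, cl i * x i)).card ≤ 2 ^ (n-1) - 2 ^ (s-1) := by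
  obtain ⟨u, hu⟩ := exists_two_mul_card_filter_ne_add_sum_mul_le f
    (fun x => c ∅ + ∑ i, c {i} * x i) J
    fun x hx => (hc x).trans (sum_mul_prod_eq_affine_of_forall_notMem_eq_zero c J hJc x hx)
  refine ⟨c ∅, fun i => c {i} + u i, le_two_pow_pred_sub_two_pow_pred ?_⟩
  simpa only [add_mul, sum_add_distrib, add_assoc, Fintype.card_fin, hJ] using hu
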